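/- Let F be α-strongly convex and β-smooth with minimizer w*. Consider the inexact gradient descent update w⁺ = w - (1/β)(∇F(w) + e) with error vector e. Then F(w⁺) - F(w*) ≤ (1 - α/β)(F(w) - F(w*)) + (1/(2β))‖e‖². -/

import Mathlib

/-!
The smoothness upper bound at `w`, evaluated at the step `w⁺`, gives the inexact descent
inequality `F w⁺ ≤ F w - ‖∇F w‖² / (2β) + ‖e‖² / (2β)`: the cross terms `⟪∇F w, e⟫` cancel.
The strong convexity lower bound at `w`, minimized over the point it is evaluated at, gives the
Polyak–Łojasiewicz inequality `2α (F w - F w*) ≤ ‖∇F w‖²`. Substituting the second into the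
first yields the contraction.
-/

open scoped RealInnerProductSpace

section

variable {E : Type*} [NormedAddCommGroup E] [InnerProductSpace ℝ E]

theorem le_sub_norm_sq_add_norm_sq_of_le_quadratic_upper {F : E → ℝ} {x g : E} {β : ℝ}
    (hβ : β ≠ 0) (e : E)
    (hsm : ∀ y, F y ≤ F x + ⟪g, y - x⟫ + β / 2 * ‖y - x‖ ^ 2) :
    F (x - (1 / β) • (g + e)) ≤ F x - ‖g‖ ^ 2 / (2 * β) + ‖e‖ ^ 2 / (2 * β) := by
  have hstep : x - (1 / β) • (g + e) - x = -((1 / β) • (g + e)) := by abel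
  have hquad : ⟪g, -((1 / β) • (g + e))⟫ + β / 2 * ‖-((1 / β) • (g + e))‖ ^ 2 =
      -(‖g‖ ^ 2 / (2 * β)) + ‖e‖ ^ 2 / (2 * β) := by
    rw [norm_neg, norm_smul, mul_pow, Real.norm_eq_abs, sq_abs, norm_add_sq_real,
      inner_neg_right, real_inner_smul_right, inner_add_right, real_inner_self_eq_norm_sq]
    field_simp
    ring
  have h := hsm (x - (1 / β) • (g + e))
  rw [hstep] at h
  linarith

theorem two_mul_sub_le_norm_sq_of_quadratic_lower_le {F : E → ℝ} {x g z : E} {α : ℝ}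
    (hα : 0 ≤ α) (hsc : F z ≥ F x + ⟪g, z - x⟫ + α / 2 * ‖z - x‖ ^ 2) :
    2 * α * (F x - F z) ≤ ‖g‖ ^ 2 := by
  have hsq : 0 ≤ ‖g + α • (z - x)‖ ^ 2 := sq_nonneg _
  rw [norm_add_sq_real, real_inner_smul_right, norm_smul, Real.norm_eq_abs, abs_of_nonneg hα]
    at hsq
  nlinarith

end

theorem inexact_gradient_descent_contraction_general
    {d : ℕ} (F : EuclideanSpace ℝ (Fin d) → ℝ)
    (F' : EuclideanSpace ℝ (Fin d) → EuclideanSpace ℝ (Fin d))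
    (α β : ℝ) (hα : 0 < α) (hβ : 0 < β)
    (hsc : ∀ x y, F y ≥ F x + ⟪F' x, y - x⟫ + α / 2 * ‖y - x‖ ^ 2)
    (hsm : ∀ x y, F y ≤ F x + ⟪F' x, y - x⟫ + β / 2 * ‖y - x‖ ^ 2)
    (wstar : EuclideanSpace ℝ (Fin d))
    (w e : EuclideanSpace ℝ (Fin d)) :
    F (w - (1 / β) • (F' w + e)) - F wstar ≤
      (1 - α / β) * (F w - F wstar) + 1 / (2 * β) * ‖e‖ ^ 2 := by
  have hdescent :=
    le_sub_norm_sq_add_norm_sq_of_le_quadratic_upper hβ.ne' e (hsm w)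
  have hPL := two_mul_sub_le_norm_sq_of_quadratic_lower_le hα.le (hsc w wstar)
  have hPL' : α / β * (F w - F wstar) ≤ ‖F' w‖ ^ 2 / (2 * β) := by
    calc α / β * (F w - F wstar) = 2 * α * (F w - F wstar) / (2 * β) := by field_simp
      _ ≤ ‖F' w‖ ^ 2 / (2 * β) := by gcongr
  calc F (w - (1 / β) • (F' w + e)) - F wstar
      ≤ F w - F wstar - ‖F' w‖ ^ 2 / (2 * β) + ‖e‖ ^ 2 / (2 * β) := by linarith
    _ ≤ F w - F wstar - α / β * (F w - F wstar) + ‖e‖ ^ 2 / (2 * β) := by linarith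
    _ = (1 - α / β) * (F w - F wstar) + 1 / (2 * β) * ‖e‖ ^ 2 := by ring

/-- One inexact gradient descent step `w⁺ = w - (1/β)(∇F(w) + e)` on an `α`-strongly convex
and `β`-smooth function `F` satisfies
`F(w⁺) - F(w*) ≤ (1 - α/β)(F(w) - F(w*)) + (1/(2β))‖e‖²`. -/
theorem inexact_gradient_descent_contraction
    {d : ℕ} (F : EuclideanSpace ℝ (Fin d) → ℝ)
    (F' : EuclideanSpace ℝ (Fin d) → EuclideanSpace ℝ (Fin d))
    (hgrad : ∀ x, HasGradientAt F (F' x) x)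
    (α β : ℝ) (hα : 0 < α) (hβ : 0 < β) (hαβ : α ≤ β)
    (hsc : ∀ x y, F y ≥ F x + ⟪F' x, y - x⟫ + α / 2 * ‖y - x‖ ^ 2)
    (hsm : ∀ x y, F y ≤ F x + ⟪F' x, y - x⟫ + β / 2 * ‖y - x‖ ^ 2)
    (wstar : EuclideanSpace ℝ (Fin d)) (hmin : ∀ y, F wstar ≤ F y)
    (w e : EuclideanSpace ℝ (Fin d)) :
    F (w - (1 / β) • (F' w + e)) - F wstar ≤
      (1 - α / β) * (F w - F wstar) + 1 / (2 * β) * ‖e‖ ^ 2 :=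
  inexact_gradient_descent_contraction_general F F' α β hα hβ hsc hsm wstar w e
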